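/- (CMS for varying skew and aspect ratio.) Let R_y(ϕ) denote rotation about the y-axis by angle ϕ. Suppose a collection of cameras with internal matrices Kⁱ = [[fⁱ, sⁱfⁱ, 0], [0, αⁱfⁱ, 0], [0, 0, 1]], rotations R_y(ϕⁱ), and arbitrary translations tⁱ = (t_Xⁱ, t_Yⁱ, t_Zⁱ)ᵀ, observes a set of scene points (Xⱼ, Yⱼ, Zⱼ). Then for every k ≠ 0, the alternative configuration with scene points (Xⱼ, kYⱼ, Zⱼ), translations (t_Xⁱ, k t_Yⁱ, t_Zⁱ), skews sⁱ/k, and aspect ratios αⁱ/k produces exactly the same homogeneous image projections Kⁱ(R_y(ϕⁱ)X + tⁱ) for all cameras and points. Hence the scale k of the y-direction cannot be determined from the images, and such camera motions form a critical motion sequence. -/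

import Mathlib

open Matrix

/-- Rotation about the y-axis by angle `ϕ`. -/
noncomputable def Ry (ϕ : ℝ) : Matrix (Fin 3) (Fin 3) ℝ :=
  !![Real.cos ϕ, 0, Real.sin ϕ; 0, 1, 0; -Real.sin ϕ, 0, Real.cos ϕ]

/-- Internal parameter matrix with focal length `f`, skew `s`, aspect ratio `a`. -/
def Kmat (f s a : ℝ) : Matrix (Fin 3) (Fin 3) ℝ :=
  !![f, s*f, 0; 0, a*f, 0; 0, 0, 1]

/-! The ambiguity is the scaling `D = diag(1, k, 1)` of the `y`-axis. It commutes with every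
rotation about that axis, so `R (D X) + D t = D (R X + t)`, and it is absorbed by the internal
matrix: `K(f, s/k, a/k) D = K(f, s, a)`. -/

def yScale {R : Type*} [Zero R] [One R] (k : R) : Matrix (Fin 3) (Fin 3) R :=
  diagonal ![1, k, 1]

theorem yScale_mulVec {R : Type*} [NonAssocSemiring R] (k x y z : R) :
    yScale k *ᵥ ![x, y, z] = ![x, k * y, z] := by
  ext l
  fin_cases l <;> simp [yScale, mulVec_diagonal]

theorem commute_Ry_yScale (ϕ k : ℝ) : Commute (Ry ϕ) (yScale k) := by
  ext l m
  fin_cases l <;> fin_cases m <;> simp [Ry, yScale, mul_comm]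

theorem Kmat_div_mul_yScale (f s a : ℝ) {k : ℝ} (hk : k ≠ 0) :
    Kmat f (s / k) (a / k) * yScale k = Kmat f s a := by
  ext l m
  fin_cases l <;> fin_cases m <;> simp [Kmat, yScale] <;> field_simp

/-- CMS for varying skew and aspect ratio: if all cameras have rotations
about the y-axis `R_y(ϕⁱ)`, then scaling all `Y` scene coordinates and `t_Y` by `k ≠ 0`
while replacing skews `sⁱ` by `sⁱ/k` and aspect ratios `αⁱ` by `αⁱ/k` yields exactly the
same homogeneous image projections for every camera `i` and point `j`; hence the scale `k`
cannot be determined and such motions are a critical motion sequence. -/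
theorem cms_parallel_y_axis {ι κ : Type*}
    (f s a ϕ tX tY tZ : ι → ℝ) (X Y Z : κ → ℝ) (k : ℝ) (hk : k ≠ 0) :
    ∀ (i : ι) (j : κ),
      (Kmat (f i) (s i / k) (a i / k)) *ᵥ
        ((Ry (ϕ i)) *ᵥ ![X j, k * Y j, Z j] + ![tX i, k * tY i, tZ i]) =
      (Kmat (f i) (s i) (a i)) *ᵥ
        ((Ry (ϕ i)) *ᵥ ![X j, Y j, Z j] + ![tX i, tY i, tZ i]) := by
  intro i j
  rw [← yScale_mulVec, ← yScale_mulVec, mulVec_mulVec, (commute_Ry_yScale _ _).eq,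
    ← mulVec_mulVec, ← mulVec_add, mulVec_mulVec, Kmat_div_mul_yScale _ _ _ hk]
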